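/- arXiv:0909.1255 — 3 statements merged into one kernel-verified Lean document; each statement's English description precedes it below -/
import Mathlib

section
/- If S is a T-Zamfirescu mapping on a cone metric space (M,d), then there exists δ with 0 ≤ δ < 1 such that d(TSx, TSy) ≤ δ·d(Tx,Ty) + 2δ·d(Tx,TSy) for all x,y ∈ M. -/
open Filter Topology

variable {E : Type*}

/-- A cone in a real Banach space. -/
def IsCone [NormedAddCommGroup E] [NormedSpace ℝ E] (P : Set E) : Prop :=
  IsClosed P ∧ P.Nonempty ∧ P ≠ {0} ∧
  (∀ (a b : ℝ), 0 ≤ a → 0 ≤ b → ∀ x ∈ P, ∀ y ∈ P, a • x + b • y ∈ P) ∧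
  (∀ x, x ∈ P → -x ∈ P → x = 0)

/-- The partial order induced by the cone `P`: `x ≤ y` iff `y - x ∈ P`. -/
def coneLe [NormedAddCommGroup E] (P : Set E) (x y : E) : Prop := y - x ∈ P

/-- `x ≪ y` iff `y - x ∈ int P`. -/
def coneLt [NormedAddCommGroup E] (P : Set E) (x y : E) : Prop := y - x ∈ interior P

/-- A normal cone with normal constant `K`. -/
def IsNormalCone [NormedAddCommGroup E] (P : Set E) (K : ℝ) : Prop :=
  0 < K ∧ ∀ x y : E, coneLe P 0 x → coneLe P x y → ‖x‖ ≤ K * ‖y‖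

/-- A cone metric on `M` with values in `E`, relative to the cone `P`. -/
def IsConeMetric [NormedAddCommGroup E] {M : Type*} (P : Set E) (d : M → M → E) : Prop :=
  (∀ x y : M, coneLe P 0 (d x y)) ∧
  (∀ x y : M, d x y = 0 ↔ x = y) ∧
  (∀ x y : M, d x y = d y x) ∧
  (∀ x y z : M, coneLe P (d x y) (d x z + d z y))

/-- Convergence of a sequence in a cone metric space. -/
def ConeConverges [NormedAddCommGroup E] {M : Type*} (P : Set E) (d : M → M → E)
    (s : ℕ → M) (x : M) : Prop :=
  ∀ c : E, coneLt P 0 c → ∃ n₀ : ℕ, ∀ n > n₀, coneLt P (d (s n) x) c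

/-- Cauchy sequence in a cone metric space. -/
def ConeCauchy [NormedAddCommGroup E] {M : Type*} (P : Set E) (d : M → M → E)
    (s : ℕ → M) : Prop :=
  ∀ c : E, coneLt P 0 c → ∃ n₀ : ℕ, ∀ n ≥ n₀, ∀ m ≥ n₀, coneLt P (d (s n) (s m)) c

/-- Completeness of a cone metric space. -/
def ConeComplete [NormedAddCommGroup E] {M : Type*} (P : Set E) (d : M → M → E) : Prop :=
  ∀ s : ℕ → M, ConeCauchy P d s → ∃ x : M, ConeConverges P d s x

/-- Continuity of a self-map of a cone metric space. -/
def ConeContinuous [NormedAddCommGroup E] {M : Type*} (P : Set E) (d : M → M → E)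
    (T : M → M) : Prop :=
  ∀ (s : ℕ → M) (x : M), ConeConverges P d s x → ConeConverges P d (fun n => T (s n)) (T x)

/-- `T` is subsequentially convergent. -/
def SubseqConvergent [NormedAddCommGroup E] {M : Type*} (P : Set E) (d : M → M → E)
    (T : M → M) : Prop :=
  ∀ s : ℕ → M, (∃ y, ConeConverges P d (fun n => T (s n)) y) →
    ∃ φ : ℕ → ℕ, StrictMono φ ∧ ∃ z, ConeConverges P d (fun n => s (φ n)) z

/-- `T` is sequentially convergent. -/
def SeqConvergent [NormedAddCommGroup E] {M : Type*} (P : Set E) (d : M → M → E)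
    (T : M → M) : Prop :=
  ∀ s : ℕ → M, (∃ y, ConeConverges P d (fun n => T (s n)) y) →
    ∃ z, ConeConverges P d s z

/-- `S` is a `T`-Zamfirescu mapping. -/
def TZamfirescu [NormedAddCommGroup E] [NormedSpace ℝ E] {M : Type*} (P : Set E)
    (d : M → M → E) (T S : M → M) : Prop :=
  ∃ a b c : ℝ, 0 ≤ a ∧ a < 1 ∧ 0 ≤ b ∧ b < 1/2 ∧ 0 ≤ c ∧ c < 1/2 ∧
    ∀ x y : M,
      coneLe P (d (T (S x)) (T (S y))) (a • d (T x) (T y)) ∨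
      coneLe P (d (T (S x)) (T (S y))) (b • (d (T x) (T (S x)) + d (T y) (T (S y)))) ∨
      coneLe P (d (T (S x)) (T (S y))) (c • (d (T x) (T (S y)) + d (T y) (T (S x))))

/-- `S` is a `T`-weak contraction. -/
def TWeakContraction [NormedAddCommGroup E] [NormedSpace ℝ E] {M : Type*} (P : Set E)
    (d : M → M → E) (T S : M → M) : Prop :=
  ∃ δ L : ℝ, 0 < δ ∧ δ < 1 ∧ 0 ≤ L ∧
    ∀ x y : M, coneLe P (d (T (S x)) (T (S y))) (δ • d (T x) (T y) + L • d (T y) (T (S x)))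

/-!
Each of the three Zamfirescu alternatives yields `d(TSx,TSy) ≤ t·(d(Tx,Ty) + 2·d(Tx,TSy))` for a
constant `t < 1` depending only on the alternative: `t = a` for (TZ1), while for (TZ2) and (TZ3) the
triangle inequality bounds the right-hand side by `k·(d(Tx,Ty) + 2·d(Tx,TSy) + d(TSx,TSy))`, and the
term `k·d(TSx,TSy)` is absorbed into the left, giving `t = k/(1-k)`, which is `< 1` since `k < 1/2`.
Then `δ = max(a, b/(1-b), c/(1-c))` works for all pairs.
-/

section ConeOrder

variable [NormedAddCommGroup E] {P : Set E}

theorem coneLe_add_of_nonneg_right {v : E} (hv : coneLe P 0 v) (x : E) : coneLe P x (x + v) := by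
  simpa [coneLe] using hv

variable [NormedSpace ℝ E]

namespace IsCone

theorem add_mem (hP : IsCone P) {x y : E} (hx : x ∈ P) (hy : y ∈ P) : x + y ∈ P := by
  obtain ⟨-, -, -, hcomb, -⟩ := hP
  simpa using hcomb 1 1 zero_le_one zero_le_one x hx y hy

theorem smul_mem (hP : IsCone P) {r : ℝ} (hr : 0 ≤ r) {x : E} (hx : x ∈ P) : r • x ∈ P := by
  obtain ⟨-, -, -, hcomb, -⟩ := hP
  simpa using hcomb r 0 hr le_rfl x hx x hx

theorem zero_mem (hP : IsCone P) : (0 : E) ∈ P := by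
  obtain ⟨x, hx⟩ := hP.2.1
  simpa using hP.smul_mem le_rfl hx

theorem coneLe_refl (hP : IsCone P) (x : E) : coneLe P x x := by
  simpa [coneLe] using hP.zero_mem

theorem coneLe_trans (hP : IsCone P) {x y z : E} (hxy : coneLe P x y) (hyz : coneLe P y z) :
    coneLe P x z := by
  simpa [coneLe] using hP.add_mem hyz hxy

theorem coneLe_add (hP : IsCone P) {x y x' y' : E} (h : coneLe P x y) (h' : coneLe P x' y') :
    coneLe P (x + x') (y + y') := by
  have := hP.add_mem h h'
  unfold coneLe
  convert this using 1
  abel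

theorem coneLe_smul (hP : IsCone P) {r : ℝ} (hr : 0 ≤ r) {x y : E} (h : coneLe P x y) :
    coneLe P (r • x) (r • y) := by
  simpa [coneLe, smul_sub] using hP.smul_mem hr h

theorem smul_coneLe_smul_of_le (hP : IsCone P) {r s : ℝ} (hrs : r ≤ s) {v : E}
    (hv : coneLe P 0 v) : coneLe P (r • v) (s • v) := by
  simpa [coneLe, sub_smul] using hP.smul_mem (sub_nonneg.2 hrs) hv

theorem coneLe_smul_of_coneLe_smul_add_self (hP : IsCone P) {k : ℝ} (hk : k < 1) {u v : E}
    (h : coneLe P u (k • (v + u))) : coneLe P u ((k / (1 - k)) • v) := by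
  have hk' : 0 < 1 - k := by linarith
  have := hP.smul_mem (inv_nonneg.2 hk'.le) h
  unfold coneLe at this ⊢
  convert this using 1
  match_scalars
  · ring
  · field_simp
    ring

end IsCone

end ConeOrder

namespace IsConeMetric

variable [NormedAddCommGroup E] [NormedSpace ℝ E] {P : Set E} {M : Type*} {d : M → M → E}

/-- With `p = Tx`, `q = Ty`, `p' = TSx`, `q' = TSy`, this is the (TZ2) case. -/
theorem coneLe_smul_of_kannan (hP : IsCone P) (hd : IsConeMetric P d) {p q p' q' : M}
    {b : ℝ} (hb0 : 0 ≤ b) (hb : b < 1) (h : coneLe P (d p' q') (b • (d p p' + d q q'))) :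
    coneLe P (d p' q') ((b / (1 - b)) • (d p q + (2 : ℝ) • d p q')) := by
  obtain ⟨-, -, hsymm, htri⟩ := hd
  have hp : coneLe P (d p p') (d p q' + d p' q') := hsymm q' p' ▸ htri p p' q'
  have hq : coneLe P (d q q') (d p q + d p q') := hsymm q p ▸ htri q q' p
  refine hP.coneLe_smul_of_coneLe_smul_add_self hb (hP.coneLe_trans h ?_)
  convert hP.coneLe_smul hb0 (hP.coneLe_add hp hq) using 2
  module

/-- With `p = Tx`, `q = Ty`, `p' = TSx`, `q' = TSy`, this is the (TZ3) case. -/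
theorem coneLe_smul_of_chatterjea (hP : IsCone P) (hd : IsConeMetric P d) {p q p' q' : M}
    {c : ℝ} (hc0 : 0 ≤ c) (hc : c < 1) (h : coneLe P (d p' q') (c • (d p q' + d q p'))) :
    coneLe P (d p' q') ((c / (1 - c)) • (d p q + (2 : ℝ) • d p q')) := by
  obtain ⟨-, -, hsymm, htri⟩ := hd
  have hp : coneLe P (d p p') (d p q' + d p' q') := hsymm q' p' ▸ htri p p' q'
  have hq : coneLe P (d q p') (d p q + d p p') := hsymm q p ▸ htri q p' p
  have hq' : coneLe P (d q p') (d p q + (d p q' + d p' q')) :=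
    hP.coneLe_trans hq (hP.coneLe_add (hP.coneLe_refl _) hp)
  refine hP.coneLe_smul_of_coneLe_smul_add_self hc (hP.coneLe_trans h ?_)
  convert hP.coneLe_smul hc0 (hP.coneLe_add (hP.coneLe_refl (d p q')) hq') using 2
  module

theorem coneLe_add_two_smul (hP : IsCone P) (hd : IsConeMetric P d) (p q q' : M) :
    coneLe P (d p q) (d p q + (2 : ℝ) • d p q') :=
  coneLe_add_of_nonneg_right (by simpa using hP.coneLe_smul zero_le_two (hd.1 p q')) _

end IsConeMetric

theorem TZamfirescu.exists_uniform_bound [NormedAddCommGroup E] [NormedSpace ℝ E] {P : Set E}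
    {M : Type*} {d : M → M → E} {T S : M → M} (hP : IsCone P) (hd : IsConeMetric P d)
    (hTZ : TZamfirescu P d T S) :
    ∃ δ : ℝ, 0 ≤ δ ∧ δ < 1 ∧ ∀ x y : M, ∃ t ≤ δ, coneLe P (d (T (S x)) (T (S y)))
      (t • (d (T x) (T y) + (2 : ℝ) • d (T x) (T (S y)))) := by
  obtain ⟨a, b, c, ha0, ha1, hb0, hb1, hc0, hc1, hZ⟩ := hTZ
  refine ⟨max a (max (b / (1 - b)) (c / (1 - c))), le_max_of_le_left ha0,
    max_lt ha1 (max_lt ?_ ?_), fun x y => ?_⟩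
  · rw [div_lt_one (by linarith)]; linarith
  · rw [div_lt_one (by linarith)]; linarith
  rcases hZ x y with h | h | h
  · exact ⟨a, le_max_left _ _,
      hP.coneLe_trans h (hP.coneLe_smul ha0 (hd.coneLe_add_two_smul hP _ _ _))⟩
  · exact ⟨_, (le_max_left _ _).trans (le_max_right _ _),
      hd.coneLe_smul_of_kannan hP hb0 (by linarith) h⟩
  · exact ⟨_, (le_max_right _ _).trans (le_max_right _ _),
      hd.coneLe_smul_of_chatterjea hP hc0 (by linarith) h⟩

theorem tz_weak_ineq_right_general {E M : Type*} [NormedAddCommGroup E] [NormedSpace ℝ E]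
    (P : Set E) (hP : IsCone P) (d : M → M → E)
    (hd : IsConeMetric P d) (T S : M → M) (hTZ : TZamfirescu P d T S) :
    ∃ δ : ℝ, 0 ≤ δ ∧ δ < 1 ∧ ∀ x y : M,
      coneLe P (d (T (S x)) (T (S y)))
        (δ • d (T x) (T y) + (2 * δ) • d (T x) (T (S y))) := by
  obtain ⟨δ, hδ0, hδ1, hbound⟩ := hTZ.exists_uniform_bound hP hd
  refine ⟨δ, hδ0, hδ1, fun x y => ?_⟩
  obtain ⟨t, htδ, ht⟩ := hbound x y
  have hv : coneLe P 0 (d (T x) (T y) + (2 : ℝ) • d (T x) (T (S y))) :=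
    hP.coneLe_trans (hd.1 _ _) (hd.coneLe_add_two_smul hP _ _ _)
  convert hP.coneLe_trans ht (hP.smul_coneLe_smul_of_le htδ hv) using 1
  module

theorem tz_weak_ineq_right {E M : Type*} [NormedAddCommGroup E] [NormedSpace ℝ E]
    [CompleteSpace E] (P : Set E) (hP : IsCone P) (d : M → M → E)
    (hd : IsConeMetric P d) (T S : M → M) (hTZ : TZamfirescu P d T S) :
    ∃ δ : ℝ, 0 ≤ δ ∧ δ < 1 ∧ ∀ x y : M,
      coneLe P (d (T (S x)) (T (S y)))
        (δ • d (T x) (T y) + (2 * δ) • d (T x) (T (S y))) :=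
  tz_weak_ineq_right_general P hP d hd T S hTZ
end

section
/- In a cone metric space, if S is a T-Zamfirescu mapping, then S is a T-weak contraction: there exist δ ∈ (0,1) and L ≥ 0 such that d(TSx,TSy) ≤ δ·d(Tx,Ty) + L·d(Ty,TSx) for all x,y ∈ M. -/
open Filter Topology

variable {E : Type*}

/-!
Write `u = d(TSx, TSy)`, `D = d(Tx, Ty)`, `e = d(Ty, TSx)` and `w = D + 2e`. Two triangle
inequalities bound both the displacement sum `d(Tx, TSx) + d(Ty, TSy)` and the cross sum
`d(Tx, TSy) + d(Ty, TSx)` by `w + u`. So in the second and third Zamfirescu alternatives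
`u ≤ k (w + u)` with `k < 1/2`, and absorbing `u` gives `u ≤ k / (1 - k) · w` with
`k / (1 - k) < 1`; in the first alternative `u ≤ a D ≤ a w`. Hence `u ≤ δ w` for a single
`δ < 1`, which is the weak contraction inequality with `L = 2δ`.
-/

section ConeMetric

variable [NormedAddCommGroup E] {M : Type*} {P : Set E} {d : M → M → E}

theorem coneLe_add_left {x y z : E} (h : coneLe P y z) : coneLe P (x + y) (x + z) := by
  simpa [coneLe] using h

theorem coneLe_add_right {x y z : E} (h : coneLe P x y) : coneLe P (x + z) (y + z) := by
  simpa [coneLe] using h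

theorem IsConeMetric.mem (hd : IsConeMetric P d) (x y : M) : d x y ∈ P := by
  simpa [coneLe] using hd.1 x y

variable [NormedSpace ℝ E]

theorem IsCone.add_mem_s9 (hP : IsCone P) {x y : E} (hx : x ∈ P) (hy : y ∈ P) : x + y ∈ P := by
  simpa using hP.2.2.2.1 1 1 zero_le_one zero_le_one x hx y hy

theorem IsCone.smul_mem_s9 (hP : IsCone P) {t : ℝ} (ht : 0 ≤ t) {x : E} (hx : x ∈ P) :
    t • x ∈ P := by
  simpa using hP.2.2.2.1 t 0 ht le_rfl x hx x hx

theorem coneLe_trans (hP : IsCone P) {x y z : E} (hxy : coneLe P x y) (hyz : coneLe P y z) :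
    coneLe P x z := by
  simpa [coneLe] using hP.add_mem_s9 hyz hxy

theorem coneLe_add (hP : IsCone P) {x y x' y' : E} (h : coneLe P x y) (h' : coneLe P x' y') :
    coneLe P (x + x') (y + y') := by
  unfold coneLe
  convert hP.add_mem_s9 h h' using 1
  abel

theorem coneLe_smul (hP : IsCone P) {t : ℝ} (ht : 0 ≤ t) {x y : E} (h : coneLe P x y) :
    coneLe P (t • x) (t • y) := by
  simpa [coneLe, smul_sub] using hP.smul_mem_s9 ht h

theorem coneLe_smul_of_le (hP : IsCone P) {s t : ℝ} (hst : s ≤ t) {x : E} (hx : x ∈ P) :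
    coneLe P (s • x) (t • x) := by
  simpa [coneLe, sub_smul] using hP.smul_mem_s9 (sub_nonneg.mpr hst) hx

theorem coneLe_div_one_sub_smul_of_coneLe_smul_add (hP : IsCone P) {k : ℝ} (hk : k < 1)
    {u w : E} (h : coneLe P u (k • (w + u))) : coneLe P u ((k / (1 - k)) • w) := by
  have hk₀ : 0 < 1 - k := sub_pos.mpr hk
  have hmul : coneLe P ((1 - k) • u) (k • w) := by
    unfold coneLe at h ⊢
    convert h using 1
    module
  convert coneLe_smul hP (inv_nonneg.mpr hk₀.le) hmul using 1
  · rw [smul_smul, inv_mul_cancel₀ hk₀.ne', one_smul]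
  · rw [smul_smul, div_eq_inv_mul]

theorem coneLe_div_one_sub_smul_of_coneLe_smul (hP : IsCone P) {k : ℝ} (hk₀ : 0 ≤ k)
    (hk₁ : k < 1) {u v w : E} (huv : coneLe P u (k • v)) (hv : coneLe P v (w + u)) :
    coneLe P u ((k / (1 - k)) • w) :=
  coneLe_div_one_sub_smul_of_coneLe_smul_add hP hk₁
    (coneLe_trans hP huv (coneLe_smul hP hk₀ hv))

theorem IsConeMetric.displacement_sum_le (hP : IsCone P) (hd : IsConeMetric P d)
    (p q r s : M) :
    coneLe P (d p r + d q s) (d p q + (2 : ℝ) • d q r + d r s) := by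
  have h := coneLe_add hP (hd.2.2.2 p r q) (hd.2.2.2 q s r)
  unfold coneLe at h ⊢
  convert h using 1
  module

theorem IsConeMetric.cross_sum_le (hP : IsCone P) (hd : IsConeMetric P d) (p q r s : M) :
    coneLe P (d p s + d q r) (d p q + (2 : ℝ) • d q r + d r s) := by
  have hps : coneLe P (d p s) (d p q + (d q r + d r s)) :=
    coneLe_trans hP (hd.2.2.2 p s q) (coneLe_add_left (hd.2.2.2 q s r))
  have h := coneLe_add_right (z := d q r) hps
  unfold coneLe at h ⊢
  convert h using 1
  module

theorem TZamfirescu.exists_coneLe_smul (hP : IsCone P) (hd : IsConeMetric P d) {T S : M → M}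
    (h : TZamfirescu P d T S) :
    ∃ δ : ℝ, 0 < δ ∧ δ < 1 ∧ ∀ x y : M,
      coneLe P (d (T (S x)) (T (S y))) (δ • (d (T x) (T y) + (2 : ℝ) • d (T y) (T (S x)))) := by
  obtain ⟨a, b, c, ha₀, ha₁, hb₀, hb₁, hc₀, hc₁, hcases⟩ := h
  have hb : b < 1 := by linarith
  have hc : c < 1 := by linarith
  set δ := max (max a (1 / 2)) (max (b / (1 - b)) (c / (1 - c)))
  have hδ₀ : 0 < δ := lt_of_lt_of_le (by norm_num) (le_trans (le_max_right a _) (le_max_left _ _))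
  have hδ₁ : δ < 1 := by
    refine max_lt (max_lt ha₁ (by norm_num)) (max_lt ?_ ?_)
    · rw [div_lt_one (by linarith)]; linarith
    · rw [div_lt_one (by linarith)]; linarith
  refine ⟨δ, hδ₀, hδ₁, fun x y => ?_⟩
  set u := d (T (S x)) (T (S y))
  set w := d (T x) (T y) + (2 : ℝ) • d (T y) (T (S x))
  have he : (2 : ℝ) • d (T y) (T (S x)) ∈ P := hP.smul_mem_s9 zero_le_two (hd.mem _ _)
  have raise : ∀ t ≤ δ, coneLe P u (t • w) → coneLe P u (δ • w) := fun t ht hu =>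
    coneLe_trans hP hu (coneLe_smul_of_le hP ht (hP.add_mem_s9 (hd.mem _ _) he))
  rcases hcases x y with hu | hu | hu
  · refine raise a (le_trans (le_max_left _ _) (le_max_left _ _)) (coneLe_trans hP hu ?_)
    exact coneLe_smul hP ha₀ (by simpa [coneLe, w] using he)
  · exact raise _ (le_trans (le_max_left _ _) (le_max_right _ _))
      (coneLe_div_one_sub_smul_of_coneLe_smul hP hb₀ hb hu (hd.displacement_sum_le hP _ _ _ _))
  · exact raise _ (le_trans (le_max_right _ _) (le_max_right _ _))
      (coneLe_div_one_sub_smul_of_coneLe_smul hP hc₀ hc hu (hd.cross_sum_le hP _ _ _ _))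

end ConeMetric

theorem tz_implies_tweak_general {E M : Type*} [NormedAddCommGroup E]
    [NormedSpace ℝ E] (P : Set E) (hP : IsCone P)
    (d : M → M → E) (hd : IsConeMetric P d) (T S : M → M)
    (hTZ : TZamfirescu P d T S) :
    TWeakContraction P d T S := by
  obtain ⟨δ, hδ₀, hδ₁, hle⟩ := hTZ.exists_coneLe_smul hP hd
  refine ⟨δ, 2 * δ, hδ₀, hδ₁, by positivity, fun x y => ?_⟩
  convert hle x y using 2
  module

theorem tz_implies_tweak {E M : Type*} [NormedAddCommGroup E]
    [NormedSpace ℝ E] [CompleteSpace E] (P : Set E) (hP : IsCone P)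
    (d : M → M → E) (hd : IsConeMetric P d) (T S : M → M)
    (hTZ : TZamfirescu P d T S) :
    TWeakContraction P d T S :=
  tz_implies_tweak_general P hP d hd T S hTZ
end

section
/- Let (M,d) be a cone metric space over a normal cone P with normal constant K. If xₙ → x and yₙ → y in M (in the cone-metric sense), then d(xₙ,yₙ) → d(x,y) in the norm of E. -/
open Filter Topology

variable {E : Type*}

/-! Writing `a = d(xₙ, x)` and `b = d(yₙ, y)`, the triangle inequality sandwiches
`d(xₙ, yₙ) - d(x, y)` between `-(a + b)` and `a + b` in the cone order, and normality turns this
into `‖d(xₙ, yₙ) - d(x, y)‖ ≤ (2K + 1) ‖a + b‖`. Cone convergence gives `‖a‖, ‖b‖ → 0`: the interior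
of `P` contains elements `c` of arbitrarily small norm, and `0 ≤ a ≪ c` eventually, so
`‖a‖ ≤ K ‖c‖`. -/

namespace IsCone

variable [NormedAddCommGroup E] [NormedSpace ℝ E] {P : Set E}

theorem add_mem_s19 (hP : IsCone P) {u v : E} (hu : u ∈ P) (hv : v ∈ P) : u + v ∈ P := by
  simpa using hP.2.2.2.1 1 1 zero_le_one zero_le_one u hu v hv

theorem smul_mem_s19 (hP : IsCone P) {t : ℝ} (ht : 0 ≤ t) {u : E} (hu : u ∈ P) : t • u ∈ P := by
  simpa using hP.2.2.2.1 t 0 ht le_rfl u hu u hu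

theorem smul_mem_interior (hP : IsCone P) {t : ℝ} (ht : 0 < t) {u : E} (hu : u ∈ interior P) :
    t • u ∈ interior P := by
  open scoped Pointwise in
  have hsub : t • interior P ⊆ interior P := by
    rw [← interior_smul₀ ht.ne']
    exact interior_mono (Set.smul_set_subset_iff.2 fun v hv => hP.smul_mem_s19 ht.le hv)
  exact hsub (Set.smul_mem_smul_set hu)

theorem exists_mem_interior_norm_lt (hP : IsCone P) (hint : (interior P).Nonempty) {ε : ℝ}
    (hε : 0 < ε) : ∃ c ∈ interior P, ‖c‖ < ε := by
  obtain ⟨e, he⟩ := hint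
  refine ⟨(ε / (‖e‖ + 1)) • e, hP.smul_mem_interior (by positivity) he, ?_⟩
  rw [norm_smul, Real.norm_of_nonneg (by positivity), div_mul_eq_mul_div,
    div_lt_iff₀ (by positivity)]
  nlinarith [norm_nonneg e]

end IsCone

theorem IsNormalCone.norm_sub_le [NormedAddCommGroup E] {P : Set E} {K : ℝ}
    (hK : IsNormalCone P K) {u v w : E} (h₁ : coneLe P u (v + w)) (h₂ : coneLe P v (u + w)) :
    ‖u - v‖ ≤ (2 * K + 1) * ‖w‖ := by
  have hlower : coneLe P 0 (u - v + w) := by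
    unfold coneLe at *
    convert h₂ using 1
    abel
  have hupper : coneLe P (u - v + w) (w + w) := by
    unfold coneLe at *
    convert h₁ using 1
    abel
  have hnormal := hK.2 _ _ hlower hupper
  calc ‖u - v‖ = ‖(u - v + w) - w‖ := by rw [add_sub_cancel_right]
    _ ≤ ‖u - v + w‖ + ‖w‖ := _root_.norm_sub_le _ _
    _ ≤ K * (‖w‖ + ‖w‖) + ‖w‖ := by
      gcongr
      exact hnormal.trans (mul_le_mul_of_nonneg_left (norm_add_le w w) hK.1.le)
    _ = (2 * K + 1) * ‖w‖ := by ring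

theorem IsConeMetric.coneLe_dist_add [NormedAddCommGroup E] [NormedSpace ℝ E] {M : Type*}
    {P : Set E} {d : M → M → E} (hP : IsCone P) (hd : IsConeMetric P d) (x y x' y' : M) :
    coneLe P (d x' y') (d x y + (d x' x + d y' y)) := by
  have hsum := hP.add_mem_s19 (hd.2.2.2 x' y' x) (hd.2.2.2 x y' y)
  unfold coneLe at *
  convert hsum using 1
  rw [hd.2.2.1 y' y]
  abel

theorem ConeConverges.tendsto_dist_zero [NormedAddCommGroup E] [NormedSpace ℝ E] {M : Type*}
    {P : Set E} {K : ℝ} {d : M → M → E} {s : ℕ → M} {x : M} (hs : ConeConverges P d s x)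
    (hP : IsCone P) (hint : (interior P).Nonempty) (hK : IsNormalCone P K)
    (hd : IsConeMetric P d) : Tendsto (fun n => d (s n) x) atTop (𝓝 0) := by
  rw [Metric.tendsto_atTop]
  intro ε hε
  obtain ⟨c, hc, hcε⟩ := hP.exists_mem_interior_norm_lt hint (div_pos hε hK.1)
  obtain ⟨n₀, hn₀⟩ := hs c (by simpa [coneLt] using hc)
  refine ⟨n₀ + 1, fun n hn => ?_⟩
  rw [dist_zero_right]
  calc ‖d (s n) x‖ ≤ K * ‖c‖ := hK.2 _ _ (hd.1 _ _) (interior_subset (hn₀ n hn))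
    _ < ε := by rwa [lt_div_iff₀' hK.1] at hcε

theorem cone_dist_tendsto_general {E M : Type*} [NormedAddCommGroup E]
    [NormedSpace ℝ E] (P : Set E) (K : ℝ) (hP : IsCone P)
    (hint : (interior P).Nonempty) (hK : IsNormalCone P K)
    (d : M → M → E) (hd : IsConeMetric P d)
    (xs ys : ℕ → M) (x y : M)
    (hx : ConeConverges P d xs x) (hy : ConeConverges P d ys y) :
    Filter.Tendsto (fun n : ℕ => d (xs n) (ys n)) Filter.atTop (nhds (d x y)) := by
  have hdist : ∀ n, ‖d (xs n) (ys n) - d x y‖ ≤ (2 * K + 1) * ‖d (xs n) x + d (ys n) y‖ := by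
    intro n
    refine hK.norm_sub_le (hd.coneLe_dist_add hP x y (xs n) (ys n)) ?_
    rw [← hd.2.2.1 x (xs n), ← hd.2.2.1 y (ys n)]
    exact hd.coneLe_dist_add hP (xs n) (ys n) x y
  have hsmall : Tendsto (fun n => (2 * K + 1) * ‖d (xs n) x + d (ys n) y‖) atTop (𝓝 0) := by
    simpa using (((hx.tendsto_dist_zero hP hint hK hd).add
      (hy.tendsto_dist_zero hP hint hK hd)).norm.const_mul (2 * K + 1))
  rw [tendsto_iff_norm_sub_tendsto_zero]
  exact squeeze_zero (fun _ => norm_nonneg _) hdist hsmall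

theorem cone_dist_tendsto {E M : Type*} [NormedAddCommGroup E]
    [NormedSpace ℝ E] [CompleteSpace E] (P : Set E) (K : ℝ) (hP : IsCone P)
    (hint : (interior P).Nonempty) (hK : IsNormalCone P K)
    (d : M → M → E) (hd : IsConeMetric P d)
    (xs ys : ℕ → M) (x y : M)
    (hx : ConeConverges P d xs x) (hy : ConeConverges P d ys y) :
    Filter.Tendsto (fun n : ℕ => d (xs n) (ys n)) Filter.atTop (nhds (d x y)) :=
  cone_dist_tendsto_general P K hP hint hK d hd xs ys x y hx hy
end
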